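/- arXiv:2405.11171 — 2 statements merged into one kernel-verified Lean document; each statement's English description precedes it below -/
import Mathlib

section
/- If G is a finite claw-free graph, then the domination number equals the independent domination number: γ(G) = i(G). -/
/-!
Allan–Laskar: take a dominating set `D` and, as long as it is not independent, pick an edge `xy`
inside it. If `D \ {x}` still dominates, drop `x`. Otherwise `x` has a private neighbour `w` outside
`D`, and claw-freeness at `x` (leaves `y`, `w` and any vertex dominated by `x` alone) shows that
`(D \ {x}) ∪ {w}` dominates; it has the same size and fewer internal edges. Either way
`|D| + #edges inside D` drops, so the process ends at an independent dominating set no larger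
than `D`.
-/

namespace SimpleGraph

variable {V : Type*} (G : SimpleGraph V)

def IsClawFree : Prop :=
  ∀ a b c d : V, G.Adj a b → G.Adj a c → G.Adj a d →
    ¬ G.Adj b c → ¬ G.Adj b d → ¬ G.Adj c d → b = c ∨ b = d ∨ c = d

def IsDominating (S : Finset V) : Prop :=
  ∀ v : V, v ∉ S → ∃ u ∈ S, G.Adj u v

/-- Ordered pairs of adjacent vertices of `S`: twice the number of edges inside `S`. -/
def adjPairs [DecidableRel G.Adj] (S : Finset V) : Finset (V × V) :=
  (S ×ˢ S).filter fun p => G.Adj p.1 p.2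

variable {G}

section adjPairs

variable [DecidableRel G.Adj]

lemma adjPairs_mono {S T : Finset V} (h : S ⊆ T) : G.adjPairs S ⊆ G.adjPairs T :=
  Finset.filter_subset_filter _ (Finset.product_subset_product h h)

lemma adjPairs_insert_of_forall_not_adj [DecidableEq V] {S : Finset V} {w : V} (hw : ∀ u ∈ S, ¬ G.Adj u w) :
    G.adjPairs (insert w S) = G.adjPairs S := by
  ext ⟨a, b⟩
  simp only [adjPairs, Finset.mem_filter, Finset.mem_product, Finset.mem_insert]
  constructor
  · rintro ⟨⟨rfl | ha, rfl | hb⟩, hab⟩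
    · exact absurd hab (G.loopless.irrefl _)
    · exact absurd hab.symm (hw b hb)
    · exact absurd hab (hw a ha)
    · exact ⟨⟨ha, hb⟩, hab⟩
  · rintro ⟨⟨ha, hb⟩, hab⟩
    exact ⟨⟨Or.inr ha, Or.inr hb⟩, hab⟩

lemma adjPairs_erase_ssubset [DecidableEq V] {S : Finset V} {x y : V} (hx : x ∈ S) (hy : y ∈ S)
    (hxy : G.Adj x y) : G.adjPairs (S.erase x) ⊂ G.adjPairs S := by
  refine Finset.ssubset_iff_subset_ne.mpr ⟨adjPairs_mono (S.erase_subset x), fun h => ?_⟩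
  have hmem : (x, y) ∈ G.adjPairs S := Finset.mem_filter.mpr ⟨Finset.mk_mem_product hx hy, hxy⟩
  rw [← h] at hmem
  simp [adjPairs] at hmem

end adjPairs

variable {D : Finset V}

section swap

variable [DecidableEq V] {x y w : V}

lemma IsDominating.exists_private_neighbor (hD : G.IsDominating D) (hx : x ∈ D) (hy : y ∈ D)
    (hxy : G.Adj x y) (hx' : ¬ G.IsDominating (D.erase x)) :
    ∃ w ∉ D, G.Adj x w ∧ ∀ u ∈ D.erase x, ¬ G.Adj u w := by
  simp only [IsDominating, not_forall, not_exists, not_and, exists_prop] at hx'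
  obtain ⟨w, hwD', hpriv⟩ := hx'
  have hyx : y ∈ D.erase x := Finset.mem_erase.mpr ⟨hxy.ne.symm, hy⟩
  have hwx : w ≠ x := by
    rintro rfl
    exact hpriv y hyx hxy.symm
  have hwD : w ∉ D := fun h => hwD' (Finset.mem_erase.mpr ⟨hwx, h⟩)
  obtain ⟨u, huD, huw⟩ := hD w hwD
  obtain rfl : u = x := by_contra fun hux => hpriv u (Finset.mem_erase.mpr ⟨hux, huD⟩) huw
  exact ⟨w, hwD, huw, hpriv⟩

lemma IsClawFree.isDominating_insert_erase (hG : G.IsClawFree) (hD : G.IsDominating D)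
    (hx : x ∈ D) (hy : y ∈ D) (hxy : G.Adj x y) (hw : w ∉ D) (hxw : G.Adj x w)
    (hpriv : ∀ u ∈ D.erase x, ¬ G.Adj u w) : G.IsDominating (insert w (D.erase x)) := by
  have hyx : y ∈ D.erase x := Finset.mem_erase.mpr ⟨hxy.ne.symm, hy⟩
  intro v hv
  rw [Finset.mem_insert, Finset.mem_erase, not_or, not_and_or, not_not] at hv
  obtain ⟨hvw, rfl | hvD⟩ := hv
  · exact ⟨y, Finset.mem_insert_of_mem hyx, hxy.symm⟩
  by_cases hcov : ∃ u ∈ D.erase x, G.Adj u v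
  · obtain ⟨u, hu, huv⟩ := hcov
    exact ⟨u, Finset.mem_insert_of_mem hu, huv⟩
  push Not at hcov
  obtain ⟨u, huD, huv⟩ := hD v hvD
  obtain rfl : u = x := by_contra fun hux => hcov u (Finset.mem_erase.mpr ⟨hux, huD⟩) huv
  by_cases hwv : G.Adj w v
  · exact ⟨w, Finset.mem_insert_self _ _, hwv⟩
  -- otherwise `y, w, v` would be the leaves of a claw at `u`
  rcases hG u y w v hxy hxw huv (hpriv y hyx) (hcov y hyx) hwv with rfl | rfl | rfl
  · exact absurd hy hw
  · exact absurd hy hvD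
  · exact absurd rfl hvw

lemma IsClawFree.exists_smaller_isDominating [DecidableRel G.Adj] (hG : G.IsClawFree)
    (hD : G.IsDominating D) (hind : ¬ G.IsIndepSet ↑D) :
    ∃ D', G.IsDominating D' ∧ D'.card ≤ D.card ∧
      D'.card + (G.adjPairs D').card < D.card + (G.adjPairs D).card := by
  obtain ⟨x, hx, y, hy, -, hxy⟩ : ∃ x ∈ D, ∃ y ∈ D, x ≠ y ∧ G.Adj x y := by
    simpa [IsIndepSet, Set.Pairwise] using hind
  have hlt := Finset.card_lt_card (adjPairs_erase_ssubset hx hy hxy)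
  have hcard := Finset.card_erase_of_mem hx
  have hpos := Finset.card_pos.mpr ⟨x, hx⟩
  by_cases hx' : G.IsDominating (D.erase x)
  · exact ⟨D.erase x, hx', Finset.card_erase_le, by omega⟩
  obtain ⟨w, hw, hxw, hpriv⟩ := hD.exists_private_neighbor hx hy hxy hx'
  have hw' : w ∉ D.erase x := fun h => hw (Finset.mem_of_mem_erase h)
  refine ⟨insert w (D.erase x), hG.isDominating_insert_erase hD hx hy hxy hw hxw hpriv, ?_, ?_⟩
  · rw [Finset.card_insert_of_notMem hw']
    omega
  · rw [Finset.card_insert_of_notMem hw', adjPairs_insert_of_forall_not_adj hpriv]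
    omega

end swap

theorem IsClawFree.exists_isIndepSet_isDominating_card_le (hG : G.IsClawFree)
    (hD : G.IsDominating D) : ∃ S : Finset V, G.IsDominating S ∧ G.IsIndepSet ↑S ∧
      S.card ≤ D.card := by
  classical
  induction h : D.card + (G.adjPairs D).card using Nat.strong_induction_on generalizing D with
  | _ n ih =>
  by_cases hind : G.IsIndepSet ↑D
  · exact ⟨D, hD, hind, le_rfl⟩
  obtain ⟨D', hD', hle, hlt⟩ := hG.exists_smaller_isDominating hD hind
  obtain ⟨S, hS, hSind, hSle⟩ := ih _ (h ▸ hlt) hD' rfl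
  exact ⟨S, hS, hSind, hSle.trans hle⟩

end SimpleGraph

theorem clawfree_domination_eq_independent_domination_general {V : Type*}
    (G : SimpleGraph V)
    (hclaw : ∀ a b c d : V, G.Adj a b → G.Adj a c → G.Adj a d →
      ¬ G.Adj b c → ¬ G.Adj b d → ¬ G.Adj c d → b = c ∨ b = d ∨ c = d) :
    sInf {n : ℕ | ∃ S : Finset V,
        (∀ v : V, v ∉ S → ∃ u ∈ S, G.Adj u v) ∧ S.card = n} =
    sInf {n : ℕ | ∃ S : Finset V,
        (∀ v : V, v ∉ S → ∃ u ∈ S, G.Adj u v) ∧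
        (↑S : Set V).Pairwise (fun a b => ¬ G.Adj a b) ∧ S.card = n} := by
  apply csInf_eq_csInf_of_forall_exists_le
  · rintro _ ⟨D, hD, rfl⟩
    obtain ⟨S, hS, hSind, hle⟩ :=
      SimpleGraph.IsClawFree.exists_isIndepSet_isDominating_card_le hclaw hD
    exact ⟨S.card, ⟨S, hS, hSind, rfl⟩, hle⟩
  · rintro _ ⟨S, hS, -, rfl⟩
    exact ⟨S.card, ⟨S, hS, rfl⟩, le_rfl⟩

/-- In a finite claw-free graph, the domination number equals the independent
domination number: `γ(G) = i(G)`. -/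
theorem clawfree_domination_eq_independent_domination {V : Type*} [Fintype V]
    (G : SimpleGraph V)
    (hclaw : ∀ a b c d : V, G.Adj a b → G.Adj a c → G.Adj a d →
      ¬ G.Adj b c → ¬ G.Adj b d → ¬ G.Adj c d → b = c ∨ b = d ∨ c = d) :
    sInf {n : ℕ | ∃ S : Finset V,
        (∀ v : V, v ∉ S → ∃ u ∈ S, G.Adj u v) ∧ S.card = n} =
    sInf {n : ℕ | ∃ S : Finset V,
        (∀ v : V, v ∉ S → ∃ u ∈ S, G.Adj u v) ∧
        (↑S : Set V).Pairwise (fun a b => ¬ G.Adj a b) ∧ S.card = n} :=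
  clawfree_domination_eq_independent_domination_general G hclaw
end

section
/- Let T ≥ 2 be an integer and p ∈ (0,1), and set b = 1/(1 − p). If b < T and k = ⌈5·log_b T⌉, then C(T, k)·(1 − p)^{k(k−1)/2} ≤ T^{−5}, where C(T,k) is the binomial coefficient. Moreover, if 1 − p ≤ 1/T, then C(T, 5)·(1 − p)^{10} ≤ T^{−5}. -/
/-!
With `q = 1 - p`, bound `C(T, k)` by `T ^ k`; it then suffices that `T ^ k q ^ C(k, 2) T ^ a ≤ 1`
whenever `T ^ a q ^ k ≤ 1`. Squaring, `T ^ (2k + 2a) q ^ (k (k - 1)) ≤ T ^ (a (k - 1)) q ^ (k (k - 1))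
= (T ^ a q ^ k) ^ (k - 1) ≤ 1` as soon as `2k + 2a ≤ a (k - 1)`, which for `a = 5` means `k ≥ 5`.
The choice `k = ⌈5 log_b T⌉` gives `T ^ 5 ≤ b ^ k`, and `1 - p ≤ 1 / T` gives `T ^ 5 q ^ 5 ≤ 1`
with `k = 5`.
-/

open Real

theorem Nat.two_mul_choose_two (n : ℕ) : 2 * n.choose 2 = n * (n - 1) := by
  rw [Nat.choose_two_right, Nat.mul_div_cancel' (Nat.even_mul_pred_self n).two_dvd]

theorem pow_mul_pow_choose_two_le_inv_pow {T q : ℝ} (hT : 1 ≤ T) (hq : 0 ≤ q) {a k : ℕ}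
    (hak : 3 * a + 2 * k ≤ a * k) (h : T ^ a * q ^ k ≤ 1) :
    T ^ k * q ^ k.choose 2 ≤ (T ^ a)⁻¹ := by
  rw [← one_div, le_div_iff₀ (by positivity)]
  set x := T ^ k * q ^ k.choose 2 * T ^ a
  obtain ⟨r, hr⟩ : ∃ r, a * (k - 1) = 2 * k + 2 * a + r :=
    Nat.exists_eq_add_of_le (by rw [Nat.mul_sub_one]; omega)
  have hsq : x ^ 2 * T ^ r = (T ^ a * q ^ k) ^ (k - 1) := by
    calc x ^ 2 * T ^ r = T ^ (2 * k + 2 * a + r) * q ^ (2 * k.choose 2) := by ring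
      _ = (T ^ a * q ^ k) ^ (k - 1) := by rw [← hr, Nat.two_mul_choose_two]; ring
  refine (pow_le_one_iff_of_nonneg (by positivity) two_ne_zero).1 ?_
  calc x ^ 2 ≤ x ^ 2 * T ^ r := le_mul_of_one_le_right (by positivity) (one_le_pow₀ hT)
    _ = (T ^ a * q ^ k) ^ (k - 1) := hsq
    _ ≤ 1 := pow_le_one₀ (by positivity) h

theorem Nat.choose_mul_pow_choose_two_le_inv_pow {T : ℕ} (hT : 1 ≤ T) {q : ℝ} (hq : 0 ≤ q)
    {a k : ℕ} (hak : 3 * a + 2 * k ≤ a * k) (h : (T : ℝ) ^ a * q ^ k ≤ 1) :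
    (T.choose k : ℝ) * q ^ k.choose 2 ≤ ((T : ℝ) ^ a)⁻¹ :=
  calc (T.choose k : ℝ) * q ^ k.choose 2 ≤ T ^ k * q ^ k.choose 2 := by
        gcongr; exact_mod_cast Nat.choose_le_pow T k
    _ ≤ ((T : ℝ) ^ a)⁻¹ := pow_mul_pow_choose_two_le_inv_pow (by exact_mod_cast hT) hq hak h

theorem pow_le_pow_ceil_mul_logb {T b : ℝ} (hT : 0 < T) (hb : 1 < b) (a : ℕ) :
    T ^ a ≤ b ^ ⌈a * (log T / log b)⌉₊ := by
  rw [← log_le_log_iff (by positivity) (by positivity), log_pow, log_pow,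
    ← div_le_iff₀ (log_pos hb), mul_div_assoc]
  exact Nat.le_ceil _

theorem random_graph_indep_counting_general (T : ℕ) (p : ℝ)
    (hp : p ∈ Set.Ioo (0 : ℝ) 1) (b : ℝ) (hb : b = 1 / (1 - p)) :
    ((b < T → ∀ k : ℕ, k = ⌈5 * (Real.log T / Real.log b)⌉₊ →
      (T.choose k : ℝ) * (1 - p) ^ (k * (k - 1) / 2) ≤ (T : ℝ) ^ (-5 : ℤ))) ∧
    (1 - p ≤ 1 / T →
      (T.choose 5 : ℝ) * (1 - p) ^ 10 ≤ (T : ℝ) ^ (-5 : ℤ)) := by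
  have hq : 0 < 1 - p := sub_pos.2 hp.2
  have hb1 : 1 < b := by rw [hb, lt_div_iff₀ hq]; linarith [hp.1]
  rw [zpow_neg, zpow_ofNat]
  constructor
  · rintro hbT k rfl
    have hT : 1 < (T : ℝ) := hb1.trans hbT
    have hlog : 1 < log T / log b := (one_lt_div (log_pos hb1)).2 (log_lt_log (by linarith) hbT)
    have hk : 5 < ⌈5 * (log T / log b)⌉₊ := Nat.lt_ceil.2 (by push_cast; linarith)
    rw [← Nat.choose_two_right]
    refine Nat.choose_mul_pow_choose_two_le_inv_pow (by exact_mod_cast hT.le) hq.le (by omega) ?_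
    rw [show 1 - p = b⁻¹ by rw [hb, one_div, inv_inv], inv_pow, ← div_eq_mul_inv,
      div_le_one (by positivity)]
    exact pow_le_pow_ceil_mul_logb (by linarith) hb1 5
  · intro hqT
    have hT : 0 < (T : ℝ) := one_div_pos.1 (hq.trans_le hqT)
    refine Nat.choose_mul_pow_choose_two_le_inv_pow (by exact_mod_cast hT) hq.le le_rfl ?_
    rw [← mul_pow]
    exact pow_le_one₀ (by positivity) (by rwa [le_div_iff₀' hT] at hqT)

/-- The counting estimate for independent sets in a random graph: for an integer
`T ≥ 2`, `p ∈ (0,1)` and `b = 1/(1-p)`, if `b < T` and `k = ⌈5·log_b T⌉` then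
`C(T,k)·(1-p)^{k(k-1)/2} ≤ T^{-5}`; moreover, if `1 - p ≤ 1/T` then
`C(T,5)·(1-p)^{10} ≤ T^{-5}`. -/
theorem random_graph_indep_counting (T : ℕ) (hT : 2 ≤ T) (p : ℝ)
    (hp : p ∈ Set.Ioo (0 : ℝ) 1) (b : ℝ) (hb : b = 1 / (1 - p)) :
    ((b < T → ∀ k : ℕ, k = ⌈5 * (Real.log T / Real.log b)⌉₊ →
      (T.choose k : ℝ) * (1 - p) ^ (k * (k - 1) / 2) ≤ (T : ℝ) ^ (-5 : ℤ))) ∧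
    (1 - p ≤ 1 / T →
      (T.choose 5 : ℝ) * (1 - p) ^ 10 ≤ (T : ℝ) ^ (-5 : ℤ)) :=
  random_graph_indep_counting_general T p hp b hb
end
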